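/- Fix p ≥ q ≥ 1 and a subset Q ⊆ [p+2..p+q]. Let 𝒞 = {A ⊆ [p+q] : |A| = p, A ∩ [p+2..p+q] = Q}, and partition 𝒞 into 𝒜 = {A ∈ 𝒞 : Σ(A) odd} and 𝒜' = {A ∈ 𝒞 : Σ(A) even}. Then the pair 𝒜, 𝒜' is balanced. -/

import Mathlib

open Finset

/-- The two-element set of endpoints of an arc `π = (i,j)`. -/
def arcSet (π : ℕ × ℕ) : Finset ℕ := {π.1, π.2}

/-- `M` is a feasible matching for the `p`-subset `A` of `[p+q] = {1,…,p+q}`: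
`q` pairwise disjoint nested arcs `(i,j)`, `i<j`, each containing exactly one element
of `A` and one of its complement, with no free element covered by an arc's interval. -/
def IsFeasibleMatching (p q : ℕ) (A : Finset ℕ) (M : Finset (ℕ × ℕ)) : Prop :=
  M.card = q ∧
  (∀ π ∈ M, 1 ≤ π.1 ∧ π.1 < π.2 ∧ π.2 ≤ p + q) ∧
  (∀ π ∈ M, ∀ π' ∈ M, π ≠ π' → Disjoint (arcSet π) (arcSet π')) ∧
  (∀ π ∈ M, (arcSet π ∩ A).card = 1 ∧
            (arcSet π ∩ (Finset.Icc 1 (p + q) \ A)).card = 1) ∧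
  (∀ π ∈ M, ∀ π' ∈ M,
      Disjoint (Finset.Icc π.1 π.2) (Finset.Icc π'.1 π'.2) ∨
      Finset.Icc π.1 π.2 ⊆ Finset.Icc π'.1 π'.2 ∨
      Finset.Icc π'.1 π'.2 ⊆ Finset.Icc π.1 π.2) ∧
  (∀ k ∈ Finset.Icc 1 (p + q), (∀ π ∈ M, k ∉ arcSet π) →
      ∀ π ∈ M, k ∉ Finset.Icc π.1 π.2)

open Classical in
/-- The number of members of the collection `𝒜` for which `M` is a feasible matching. -/
noncomputable def feasCount (p q : ℕ) (𝒜 : Finset (Finset ℕ)) (M : Finset (ℕ × ℕ)) : ℕ :=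
  (𝒜.filter (fun A => IsFeasibleMatching p q A M)).card

/-- Two collections of `p`-subsets of `[p+q]` are balanced if every matching is a
feasible matching for equally many members of each. -/
def BalancedPair (p q : ℕ) (𝒜 𝒜' : Finset (Finset ℕ)) : Prop :=
  ∀ M : Finset (ℕ × ℕ), feasCount p q 𝒜 M = feasCount p q 𝒜' M

/-!
Fix a matching `M` and let `𝒮` be the members of `𝒞` for which `M` is feasible. If `𝒮` is
nonempty, `M` has a short arc `(i, i+1)` with `i ≤ p`: the arc with the smallest right endpoint `j`
encloses no other endpoint (every point under an arc is an endpoint, and arcs nest), and the `q`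
distinct right endpoints lie in `[j, p+q]`, so `j ≤ p + 1`. Exchanging `i` and `i+1` between `A`
and its complement keeps `M` feasible, leaves `A ∩ [p+2..p+q]` alone and changes `Σ(A)` by `±1`,
so `A ↦ A ∆ {i, i+1}` is an involution of `𝒮` exchanging its odd and even members.
-/

open scoped symmDiff

section symmDiff

variable {ι M : Type*} [DecidableEq ι] [AddCommMonoid M]

lemma Finset.sum_symmDiff_add_two_nsmul_sum_inter (s t : Finset ι) (f : ι → M) :
    ∑ i ∈ s ∆ t, f i + 2 • ∑ i ∈ s ∩ t, f i = ∑ i ∈ s, f i + ∑ i ∈ t, f i := by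
  rw [← sum_union_inter, two_nsmul, ← add_assoc, ← sum_sdiff (inter_subset_union : s ∩ t ⊆ s ∪ t),
    symmDiff_eq_sup_sdiff_inf]
  rfl

lemma Finset.card_symmDiff_add_two_mul_card_inter (s t : Finset ι) :
    #(s ∆ t) + 2 * #(s ∩ t) = #s + #t := by
  simpa only [sum_const, smul_eq_mul, mul_one] using
    sum_symmDiff_add_two_nsmul_sum_inter s t (fun _ => (1 : ℕ))

lemma Finset.odd_sum_symmDiff_iff {s t : Finset ℕ} (ht : Odd (∑ i ∈ t, i)) :
    Odd (∑ i ∈ s ∆ t, i) ↔ ¬ Odd (∑ i ∈ s, i) := by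
  have h := sum_symmDiff_add_two_nsmul_sum_inter s t id
  simp only [id, smul_eq_mul] at h
  simp only [Nat.odd_iff] at ht ⊢
  omega

lemma Finset.symmDiff_inter_of_disjoint {s t u : Finset ι} (h : Disjoint t u) :
    s ∆ t ∩ u = s ∩ u := by
  change s ∆ t ⊓ u = s ⊓ u
  rw [inf_symmDiff_distrib_right, disjoint_iff_inf_le.1 h |> le_bot_iff.1, symmDiff_bot]

end symmDiff

lemma Finset.card_filter_eq_card_filter_not_of_involution {α : Type*} {s : Finset α} {P : α → Prop}
    [DecidablePred P] (f : α → α) (hf : ∀ a ∈ s, f a ∈ s) (hff : ∀ a, f (f a) = a)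
    (hP : ∀ a ∈ s, P (f a) ↔ ¬ P a) :
    #(s.filter P) = #(s.filter (¬ P ·)) := by
  refine card_nbij' f f (fun a ha => ?_) (fun a ha => ?_) (fun a _ => hff a) (fun a _ => hff a)
  · simp only [coe_filter, Set.mem_ofPred_eq] at ha ⊢
    exact ⟨hf a ha.1, fun h => (hP a ha.1).1 h ha.2⟩
  · simp only [coe_filter, Set.mem_ofPred_eq] at ha ⊢
    exact ⟨hf a ha.1, (hP a ha.1).2 ha.2⟩

lemma mem_arcSet {k : ℕ} {π : ℕ × ℕ} : k ∈ arcSet π ↔ k = π.1 ∨ k = π.2 := by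
  simp [arcSet]

lemma odd_sum_arcSet {π : ℕ × ℕ} (h : π.2 = π.1 + 1) : Odd (∑ i ∈ arcSet π, i) := by
  rw [arcSet, sum_pair (by omega), h]
  exact ⟨π.1, by ring⟩

namespace IsFeasibleMatching

variable {p q : ℕ} {A : Finset ℕ} {M : Finset (ℕ × ℕ)} {π : ℕ × ℕ}

lemma arcSet_subset_Icc (hF : IsFeasibleMatching p q A M) (hπ : π ∈ M) :
    arcSet π ⊆ Icc 1 (p + q) := by
  obtain ⟨h1, h12, h2⟩ := hF.2.1 π hπ
  intro k hk
  rw [mem_arcSet] at hk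
  rw [mem_Icc]
  omega

lemma card_symmDiff_arcSet (hF : IsFeasibleMatching p q A M) (hπ : π ∈ M) :
    #(A ∆ arcSet π) = #A := by
  have h := card_symmDiff_add_two_mul_card_inter A (arcSet π)
  rw [arcSet, card_pair (hF.2.1 π hπ).2.1.ne, ← arcSet, inter_comm, (hF.2.2.2.1 π hπ).1] at h
  omega

lemma symmDiff_arcSet (hF : IsFeasibleMatching p q A M) (hπ : π ∈ M) :
    IsFeasibleMatching p q (A ∆ arcSet π) M := by
  have hsub := hF.arcSet_subset_Icc hπ
  obtain ⟨hcard, hbounds, hdisj, hone, hnest, hfree⟩ := hF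
  refine ⟨hcard, hbounds, hdisj, fun π' hπ' => ?_, hnest, hfree⟩
  rcases eq_or_ne π' π with rfl | h
  · have e1 : arcSet π' ∩ (A ∆ arcSet π') = arcSet π' ∩ (Icc 1 (p + q) \ A) := by
      ext k
      have := @hsub k
      simp only [mem_inter, mem_symmDiff, mem_sdiff]
      tauto
    have e2 : arcSet π' ∩ (Icc 1 (p + q) \ (A ∆ arcSet π')) = arcSet π' ∩ A := by
      ext k
      simp only [mem_inter, mem_symmDiff, mem_sdiff]
      tauto
    rw [e1, e2]
    exact (hone π' hπ').symm
  · have hd := disjoint_left.1 (hdisj π' hπ' π hπ h)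
    have e1 : arcSet π' ∩ (A ∆ arcSet π) = arcSet π' ∩ A := by
      ext k
      have := @hd k
      simp only [mem_inter, mem_symmDiff]
      tauto
    have e2 : arcSet π' ∩ (Icc 1 (p + q) \ (A ∆ arcSet π)) =
        arcSet π' ∩ (Icc 1 (p + q) \ A) := by
      ext k
      have := @hd k
      simp only [mem_inter, mem_symmDiff, mem_sdiff]
      tauto
    rw [e1, e2]
    exact hone π' hπ'

lemma exists_short_arc (hF : IsFeasibleMatching p q A M) (hq : 0 < q) :
    ∃ π ∈ M, π.2 = π.1 + 1 ∧ π.1 ≤ p := by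
  obtain ⟨hcard, hbounds, hdisj, -, hnest, hfree⟩ := hF
  obtain ⟨π, hπ, hmin⟩ := M.exists_min_image Prod.snd (card_pos.1 (hcard ▸ hq))
  obtain ⟨h1, h12, h2⟩ := hbounds π hπ
  have hinj : Set.InjOn Prod.snd (M : Set (ℕ × ℕ)) := fun π' hπ' π'' hπ'' heq => by
    by_contra hne
    exact disjoint_left.1 (hdisj π' hπ' π'' hπ'' hne) (mem_arcSet.2 (Or.inr rfl))
      (mem_arcSet.2 (Or.inr heq))
  refine ⟨π, hπ, ?_, ?_⟩
  · by_contra hlong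
    obtain ⟨π', hπ', hk⟩ : ∃ π' ∈ M, π.1 + 1 ∈ arcSet π' := by
      by_contra! hfree'
      exact hfree (π.1 + 1) (by rw [mem_Icc]; omega) hfree' π hπ (by rw [mem_Icc]; omega)
    have hne : π' ≠ π := by
      rintro rfl
      rw [mem_arcSet] at hk
      omega
    have hle : π.2 ≤ π'.2 := hmin π' hπ'
    have hne₂ : π'.2 ≠ π.2 := fun heq => hne (hinj hπ' hπ heq)
    have hlt' : π'.1 < π'.2 := (hbounds π' hπ').2.1
    rw [mem_arcSet] at hk
    rcases hnest π hπ π' hπ' with hd | hs | hs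
    · exact disjoint_left.1 hd (show π.1 + 1 ∈ Icc π.1 π.2 by rw [mem_Icc]; omega)
        (by rw [mem_Icc]; omega)
    · have := mem_Icc.1 (hs (left_mem_Icc.2 h12.le))
      omega
    · have := mem_Icc.1 (hs (right_mem_Icc.2 hlt'.le))
      omega
  · have himage : M.image Prod.snd ⊆ Icc π.2 (p + q) := by
      intro k hk
      obtain ⟨π', hπ', rfl⟩ := mem_image.1 hk
      exact mem_Icc.2 ⟨hmin π' hπ', (hbounds π' hπ').2.2⟩
    have := card_le_card himage
    rw [card_image_of_injOn hinj, hcard, Nat.card_Icc] at this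
    omega

end IsFeasibleMatching

lemma IsFeasibleMatching.symmDiff_arcSet_mem {p q : ℕ} {A Q : Finset ℕ} {M : Finset (ℕ × ℕ)}
    {π : ℕ × ℕ} (hF : IsFeasibleMatching p q A M) (hπ : π ∈ M) (hshort : π.2 = π.1 + 1)
    (hp : π.1 ≤ p)
    (hA : A ∈ (Icc 1 (p + q)).powerset.filter
      (fun A => A.card = p ∧ A ∩ Icc (p + 2) (p + q) = Q)) :
    A ∆ arcSet π ∈ (Icc 1 (p + q)).powerset.filter
      (fun A => A.card = p ∧ A ∩ Icc (p + 2) (p + q) = Q) := by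
  simp only [mem_filter, mem_powerset] at hA ⊢
  obtain ⟨hAU, hcard, hQ⟩ := hA
  have hdisj : Disjoint (arcSet π) (Icc (p + 2) (p + q)) := by
    refine disjoint_left.2 fun k hk => ?_
    rw [mem_arcSet] at hk
    rw [mem_Icc]
    omega
  exact ⟨symmDiff_subset_union.trans (union_subset hAU (hF.arcSet_subset_Icc hπ)),
    hF.card_symmDiff_arcSet hπ ▸ hcard, (symmDiff_inter_of_disjoint hdisj).trans hQ⟩

theorem stmt10_general (p q : ℕ) (hq : 1 ≤ q)
    (Q : Finset ℕ)
    (𝒞 : Finset (Finset ℕ))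
    (h𝒞 : 𝒞 = (Finset.Icc 1 (p + q)).powerset.filter
        (fun A => A.card = p ∧ A ∩ Finset.Icc (p + 2) (p + q) = Q)) :
    BalancedPair p q
      (𝒞.filter (fun A => Odd (∑ a ∈ A, a)))
      (𝒞.filter (fun A => ¬ Odd (∑ a ∈ A, a))) := by
  classical
  intro M
  simp only [feasCount]
  rw [filter_comm, filter_comm (fun A => ¬ Odd _)]
  rcases (𝒞.filter (IsFeasibleMatching p q · M)).eq_empty_or_nonempty with hempty | ⟨A₀, hA₀⟩
  · simp only [hempty, filter_empty]
  obtain ⟨π, hπ, hshort, hp⟩ := (mem_filter.1 hA₀).2.exists_short_arc hq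
  refine card_filter_eq_card_filter_not_of_involution (· ∆ arcSet π) (fun A hA => ?_)
    (fun A => symmDiff_symmDiff_cancel_right _ _) (fun A _ => odd_sum_symmDiff_iff
      (odd_sum_arcSet hshort))
  obtain ⟨hAC, hF⟩ := mem_filter.1 hA
  subst h𝒞
  exact mem_filter.2 ⟨hF.symmDiff_arcSet_mem hπ hshort hp hAC, hF.symmDiff_arcSet hπ⟩

/-- For `Q ⊆ [p+2..p+q]` and `𝒞 = {A ⊆ [p+q] : |A| = p, A ∩ [p+2..p+q] = Q}`, the
partition of `𝒞` into `𝒜 = {A ∈ 𝒞 : Σ(A) odd}` and `𝒜' = {A ∈ 𝒞 : Σ(A) even}`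
forms a balanced pair. -/
theorem stmt10 (p q : ℕ) (hq : 1 ≤ q) (hpq : q ≤ p)
    (Q : Finset ℕ) (hQ : Q ⊆ Finset.Icc (p + 2) (p + q))
    (𝒞 : Finset (Finset ℕ))
    (h𝒞 : 𝒞 = (Finset.Icc 1 (p + q)).powerset.filter
        (fun A => A.card = p ∧ A ∩ Finset.Icc (p + 2) (p + q) = Q)) :
    BalancedPair p q
      (𝒞.filter (fun A => Odd (∑ a ∈ A, a)))
      (𝒞.filter (fun A => ¬ Odd (∑ a ∈ A, a))) :=
  stmt10_general p q hq Q 𝒞 h𝒞
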